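/- For every rational subspace r, the operator ∇_{X\r} maps F(X) surjectively onto F(X∩r). -/

import Mathlib

open Function

attribute [local instance] Classical.propDecidable

noncomputable section

/-- The lattice `Γ = ι → ℤ`. -/
abbrev ZLat (ι : Type*) := ι → ℤ
/-- The ambient real vector space `V = Γ ⊗ ℝ = ι → ℝ`. -/
abbrev Amb (ι : Type*) := ι → ℝ

variable {ι : Type*} [Fintype ι]

/-- Embedding of the lattice into the ambient space. -/
def castV (γ : ZLat ι) : Amb ι := fun i => (γ i : ℝ)

/-- Standard pairing on `V`. -/
def dotR (u v : Amb ι) : ℝ := ∑ i, u i * v i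

/-- The difference operator `∇ₐ`. -/
def nab (a : ZLat ι) (f : ZLat ι → ℤ) : ZLat ι → ℤ := fun b => f b - f (b - a)

/-- `∇_Y = ∏_{a ∈ Y} ∇ₐ` for a list `Y`. -/
def nabL (Y : List (ZLat ι)) (f : ZLat ι → ℤ) : ZLat ι → ℤ := Y.foldr nab f

/-- Delta function at `0`. -/
def delta0 : ZLat ι → ℤ := fun γ => if γ = 0 then 1 else 0

/-- The partition function of a list `Y`: the number of ways of writing `γ` as a
nonnegative integral combination of the entries of `Y`. -/
def partFn (Y : List (ZLat ι)) : ZLat ι → ℤ :=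
  fun γ => Nat.card {k : Fin Y.length → ℕ // ∑ i, (k i : ℤ) • Y.get i = γ}

/-- The cone `C(Y)` of nonnegative real combinations of the entries of `Y`. -/
def coneC (Y : List (ZLat ι)) : Set (Amb ι) :=
  {v | ∃ t : Fin Y.length → ℝ, (∀ i, 0 ≤ t i) ∧ v = ∑ i, t i • castV (Y.get i)}

/-- `C(Y)` is pointed: it contains no line. -/
def PointedList (Y : List (ZLat ι)) : Prop :=
  ∀ v ∈ coneC Y, -v ∈ coneC Y → v = 0

/-- The zonotope `B(Y) = {∑ tᵢ aᵢ : 0 ≤ tᵢ ≤ 1}`. -/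
def zono (Y : List (ZLat ι)) : Set (Amb ι) :=
  {v | ∃ t : Fin Y.length → ℝ, (∀ i, 0 ≤ t i ∧ t i ≤ 1) ∧ v = ∑ i, t i • castV (Y.get i)}

/-- The real span of a list of lattice vectors. -/
def spanOf (Y : List (ZLat ι)) : Submodule ℝ (Amb ι) :=
  Submodule.span ℝ (castV '' {a | a ∈ Y})

/-- A subspace is rational (relative to `X`) if it is spanned by a sublist of `X`. -/
def IsRational (X : List (ZLat ι)) (r : Submodule ℝ (Amb ι)) : Prop :=
  ∃ Y : List (ZLat ι), (∀ a ∈ Y, a ∈ X) ∧ r = spanOf Y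

/-- The sublist `X ∩ r`. -/
def inSub (X : List (ZLat ι)) (r : Submodule ℝ (Amb ι)) : List (ZLat ι) :=
  X.filter (fun a => decide (castV a ∈ r))

/-- The sublist `X \ r`. -/
def outSub (X : List (ZLat ι)) (r : Submodule ℝ (Amb ι)) : List (ZLat ι) :=
  X.filter (fun a => decide (castV a ∉ r))

/-- The operator `∇_{X \ r}`. -/
def nabOut (X : List (ZLat ι)) (r : Submodule ℝ (Amb ι)) (f : ZLat ι → ℤ) : ZLat ι → ℤ :=
  nabL (outSub X r) f

/-- The space `𝓕(X)`: `∇_{X\r} f` is supported on `Γ ∩ r` for every rational `r`. -/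
def memF (X : List (ZLat ι)) (f : ZLat ι → ℤ) : Prop :=
  ∀ r, IsRational X r → support (nabOut X r f) ⊆ {γ | castV γ ∈ r}

/-- The Dahmen–Micchelli space of a list `Y` (inside its span): `f` is killed by
`∇_{Y \ H}` for every rational hyperplane `H` of the span of `Y`. -/
def memDM (Y : List (ZLat ι)) (f : ZLat ι → ℤ) : Prop :=
  ∀ H, IsRational Y H → Module.finrank ℝ H + 1 = Module.finrank ℝ (spanOf Y) →
    nabOut Y H f = 0

/-- `𝓕(X ∩ r)`, viewed as functions on `Γ` supported on `Γ ∩ r`. -/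
def memFrel (X : List (ZLat ι)) (r : Submodule ℝ (Amb ι)) (g : ZLat ι → ℤ) : Prop :=
  support g ⊆ {γ | castV γ ∈ r} ∧ memF (inSub X r) g

/-- `DM(X ∩ r)`, viewed as functions on `Γ` supported on `Γ ∩ r`. -/
def memDMrel (X : List (ZLat ι)) (r : Submodule ℝ (Amb ι)) (g : ZLat ι → ℤ) : Prop :=
  support g ⊆ {γ | castV γ ∈ r} ∧ memDM (inSub X r) g

/-- `u` is a regular vector for `X \ r`:  `u ∈ r^⊥` and `⟨u, a⟩ ≠ 0` for all `a ∈ X \ r`.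
It determines the regular face `F` containing it. -/
def Reg (X : List (ZLat ι)) (r : Submodule ℝ (Amb ι)) (u : Amb ι) : Prop :=
  (∀ v ∈ r, dotR u v = 0) ∧ ∀ a ∈ X, castV a ∉ r → dotR u (castV a) ≠ 0

/-- The sublist `B ⊆ X \ r` of elements negative on `u`. -/
def negPart (X : List (ZLat ι)) (r : Submodule ℝ (Amb ι)) (u : Amb ι) : List (ZLat ι) :=
  (outSub X r).filter (fun a => decide (dotR u (castV a) < 0))

/-- The list `[A, -B]`: entries of `X \ r`, with sign flipped on the part negative on `u`. -/
def signedOut (X : List (ZLat ι)) (r : Submodule ℝ (Amb ι)) (u : Amb ι) : List (ZLat ι) :=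
  (outSub X r).map (fun a => if 0 < dotR u (castV a) then a else -a)

/-- The special function `𝓟_{X\r}^F` for the face `F ∋ u`:
`(-1)^{|B|} τ_{-∑_{b∈B} b} (∏_{a∈A} ∑_k δ_{ka}) * (∏_{b∈B} ∑_k δ_{-kb})`. -/
def PF (X : List (ZLat ι)) (r : Submodule ℝ (Amb ι)) (u : Amb ι) : ZLat ι → ℤ :=
  fun γ => (-1) ^ (negPart X r u).length *
    partFn (signedOut X r u) (γ + (negPart X r u).sum)

/-- The support region `-∑_{b∈B} b + C(A, -B)` of `𝓟_{X\r}^F`, as a subset of `Γ`. -/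
def PFsupp (X : List (ZLat ι)) (r : Submodule ℝ (Amb ι)) (u : Amb ι) : Set (ZLat ι) :=
  {γ | castV (γ + (negPart X r u).sum) ∈ coneC (signedOut X r u)}

/-- Convolution of two functions on the lattice. -/
def conv (f g : ZLat ι → ℤ) : ZLat ι → ℤ := fun γ => ∑ᶠ μ, f (γ - μ) * g μ

/-- The union of all rational hyperplanes (inside the span of `Y`). -/
def hyperUnion (Y : List (ZLat ι)) : Set (Amb ι) :=
  {v | ∃ H, IsRational Y H ∧ Module.finrank ℝ H + 1 = Module.finrank ℝ (spanOf Y) ∧ v ∈ H}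

/-- A tope for `Y`: a connected component of the complement (in the span of `Y`) of the
union of the hyperplanes spanned by sublists of `Y`. -/
def IsTope (Y : List (ZLat ι)) (τ : Set (Amb ι)) : Prop :=
  ∃ v ∈ (spanOf Y : Set (Amb ι)) \ hyperUnion Y,
    τ = connectedComponentIn ((spanOf Y : Set (Amb ι)) \ hyperUnion Y) v

/-- The set of singular vectors: the union of the cones `C(Y)` over sublists `Y` of `X`
not spanning `V`. -/
def singSet (X : List (ZLat ι)) : Set (Amb ι) :=
  {v | ∃ Y : List (ZLat ι), (∀ a ∈ Y, a ∈ X) ∧ spanOf Y ≠ ⊤ ∧ v ∈ coneC Y}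

/-- A big cell: a connected component of the complement of the set of singular vectors. -/
def IsBigCell (X : List (ZLat ι)) (c : Set (Amb ι)) : Prop :=
  ∃ v ∈ (singSet X)ᶜ, c = connectedComponentIn (singSet X)ᶜ v

/-- Minkowski difference of sets, `A - B`. -/
def sdiffSet (A B : Set (Amb ι)) : Set (Amb ι) := {x | ∃ a ∈ A, ∃ b ∈ B, x = a - b}

/-!
For rational `s ⊆ r` one has `∇_{(X∩r)\s} ∇_{X\r} = ∇_{X\s}`, so `∇_{X\r}` maps `𝓕(X)` into
`𝓕(X∩r)`.

For surjectivity choose `u ⊥ r` vanishing on no element of `X \ r`, and flip the signs of the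
elements that are negative on `u`. The signed, shifted partition function `P = PF X r u` of the
flipped list is a fundamental solution: `∇_{X\r} P = δ`. For `g` supported on `r` the convolution
`f = P * g` is locally finite, since `P` lives in a translate of a cone on which `⟨u, ·⟩` is
proper while `⟨u, ·⟩` vanishes on `r`. Hence `∇_{X\r} f = g`, and for every `s`,
`∇_{X\s} f = ∇_{(X\r)\s} P * ∇_{(X∩r)\s} g`: the first factor is a partition function of
elements of `s`, and the second is supported on `s` because `g ∈ 𝓕(X∩r)`.
-/

section Preliminaries
variable {ι : Type*}

lemma mem_inSub {X : List (ZLat ι)} {r : Submodule ℝ (Amb ι)} {a : ZLat ι} :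
    a ∈ inSub X r ↔ a ∈ X ∧ castV a ∈ r := by
  simp [inSub]

lemma mem_outSub {X : List (ZLat ι)} {r : Submodule ℝ (Amb ι)} {a : ZLat ι} :
    a ∈ outSub X r ↔ a ∈ X ∧ castV a ∉ r := by
  simp [outSub]

lemma outSub_append_inSub_perm (X : List (ZLat ι)) (r : Submodule ℝ (Amb ι)) :
    (outSub X r ++ inSub X r).Perm X := by
  have h := List.filter_append_perm (fun a => decide (castV a ∉ r)) X
  rwa [List.filter_congr (p := fun a => !decide (castV a ∉ r)) (q := fun a => decide (castV a ∈ r))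
    fun a _ => by simp] at h

lemma outSub_perm (X : List (ZLat ι)) (r s : Submodule ℝ (Amb ι)) :
    (outSub X s).Perm (outSub (outSub X r) s ++ outSub (inSub X r) s) := by
  have h := (outSub_append_inSub_perm (outSub X s) r).symm
  have e1 : outSub (outSub X s) r = outSub (outSub X r) s := by
    simp only [outSub, List.filter_filter, Bool.and_comm]
  have e2 : inSub (outSub X s) r = outSub (inSub X r) s := by
    simp only [outSub, inSub, List.filter_filter, Bool.and_comm]
  rwa [e1, e2] at h

def latticeIn (s : Submodule ℝ (Amb ι)) : AddSubgroup (ZLat ι) :=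
  s.toAddSubgroup.comap ((Int.castAddHom ℝ).compLeft ι)

variable [Fintype ι]

noncomputable def pairing (u : Amb ι) : ZLat ι →+ ℝ where
  toFun γ := dotR u (castV γ)
  map_zero' := by simp [dotR, castV]
  map_add' a b := by simp [dotR, castV, mul_add, Finset.sum_add_distrib]

lemma pairing_apply (u : Amb ι) (γ : ZLat ι) : pairing u γ = dotR u (castV γ) := rfl

end Preliminaries

section Difference
variable {ι : Type*}

lemma nab_comm (a b : ZLat ι) (f : ZLat ι → ℤ) : nab a (nab b f) = nab b (nab a f) := by
  funext c
  simp only [nab, sub_right_comm c a b]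
  ring

instance : LeftCommutative (nab (ι := ι)) := ⟨nab_comm⟩

lemma nabL_perm {L L' : List (ZLat ι)} (h : L.Perm L') (f : ZLat ι → ℤ) :
    nabL L f = nabL L' f :=
  h.foldr_eq f

lemma nabL_append (L M : List (ZLat ι)) (f : ZLat ι → ℤ) :
    nabL (L ++ M) f = nabL L (nabL M f) :=
  List.foldr_append

lemma nab_nabL_comm (a : ZLat ι) (L : List (ZLat ι)) (f : ZLat ι → ℤ) :
    nab a (nabL L f) = nabL L (nab a f) :=
  (nabL_perm (List.perm_append_singleton a L).symm f).trans (nabL_append L [a] f)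

lemma nabL_mul_comp_add (L : List (ZLat ι)) (c : ℤ) (v : ZLat ι) (f : ZLat ι → ℤ) :
    nabL L (fun γ => c * f (γ + v)) = fun γ => c * nabL L f (γ + v) := by
  induction L with
  | nil => rfl
  | cons a L ih =>
    funext γ
    simp only [nabL, List.foldr_cons] at ih ⊢
    simp only [nab, ih, sub_add_eq_add_sub]
    ring

end Difference

section RationalSubspaces
variable {ι : Type*} {X : List (ZLat ι)} {r : Submodule ℝ (Amb ι)}

lemma memF.support_nabOut_subset {Y : List (ZLat ι)} {g : ZLat ι → ℤ} (hg : memF Y g)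
    (s : Submodule ℝ (Amb ι)) : support (nabOut Y s g) ⊆ latticeIn s := by
  have hle : spanOf (inSub Y s) ≤ s :=
    Submodule.span_le.mpr (by rintro _ ⟨a, ha, rfl⟩; exact (mem_inSub.mp ha).2)
  have hout : outSub Y (spanOf (inSub Y s)) = outSub Y s := List.filter_congr fun a ha => by
    simp only [decide_eq_decide]
    exact not_congr ⟨fun h => hle h, fun h => Submodule.subset_span ⟨a, mem_inSub.mpr ⟨ha, h⟩, rfl⟩⟩
  have hsupp := hg _ ⟨inSub Y s, fun a ha => (mem_inSub.mp ha).1, rfl⟩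
  rw [nabOut, hout] at hsupp
  exact hsupp.trans fun γ hγ => hle hγ

lemma nabOut_inSub_nabOut {s : Submodule ℝ (Amb ι)} (hsr : s ≤ r) (f : ZLat ι → ℤ) :
    nabOut (inSub X r) s (nabOut X r f) = nabOut X s f := by
  have hout : outSub (outSub X r) s = outSub X r := List.filter_eq_self.mpr fun a ha => by
    simpa using fun has => (mem_outSub.mp ha).2 (hsr has)
  rw [nabOut, nabOut, nabOut, ← nabL_append, nabL_perm (outSub_perm X r s), hout]
  exact nabL_perm List.perm_append_comm f

lemma memFrel_nabOut (hr : IsRational X r) {f : ZLat ι → ℤ} (hf : memF X f) :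
    memFrel X r (nabOut X r f) := by
  refine ⟨hf r hr, fun s ⟨Y, hY, hs⟩ => ?_⟩
  have hsr : s ≤ r := hs ▸ Submodule.span_le.mpr (by
    rintro _ ⟨a, ha, rfl⟩
    exact (mem_inSub.mp (hY a ha)).2)
  rw [nabOut_inSub_nabOut hsr]
  exact hf s ⟨Y, fun a ha => (mem_inSub.mp (hY a ha)).1, hs⟩

end RationalSubspaces

section PartitionFunction
variable {ι : Type*}

abbrev NatRep (Y : List (ZLat ι)) (γ : ZLat ι) : Type :=
  {k : Fin Y.length → ℕ // ∑ i, (k i : ℤ) • Y.get i = γ}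

lemma partFn_apply (Y : List (ZLat ι)) (γ : ZLat ι) : partFn Y γ = Nat.card (NatRep Y γ) := rfl

lemma partFn_perm {Y Y' : List (ZLat ι)} (h : Y.Perm Y') : partFn Y = partFn Y' := by
  funext γ
  let e : Fin Y.length ≃ Fin Y'.length :=
    Equiv.ofBijective h.idxBij ⟨h.idxBij_injective, h.idxBij_surjective⟩
  have he : ∀ i, Y'[(e i : ℕ)] = Y[(i : ℕ)] := h.getElem_idxBij_eq_getElem
  refine congrArg Nat.cast (Nat.card_congr ((e.arrowCongr (Equiv.refl ℕ)).subtypeEquiv fun k => ?_))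
  rw [← e.sum_comp]
  simp [he]

lemma nonempty_natRep_of_partFn_ne_zero {Y : List (ZLat ι)} {γ : ZLat ι} (h : partFn Y γ ≠ 0) :
    Nonempty (NatRep Y γ) :=
  (Nat.card_ne_zero.mp (Nat.cast_ne_zero.mp h)).1

lemma mem_of_partFn_ne_zero {Y : List (ZLat ι)} {γ : ZLat ι} (H : AddSubgroup (ZLat ι))
    (hY : ∀ y ∈ Y, y ∈ H) (h : partFn Y γ ≠ 0) : γ ∈ H := by
  obtain ⟨k, rfl⟩ := nonempty_natRep_of_partFn_ne_zero h
  exact H.sum_mem fun i _ => H.zsmul_mem (hY _ (Y.get_mem i)) _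

def natRepConsEquiv (x : ZLat ι) (Y : List (ZLat ι)) (γ : ZLat ι) :
    NatRep (x :: Y) γ ≃ Σ m : ℕ, NatRep Y (γ - (m : ℤ) • x) :=
  (Equiv.subtypeEquiv (p := fun k : Fin (Y.length + 1) → ℕ => ∑ i, (k i : ℤ) • (x :: Y).get i = γ)
      (q := fun p : ℕ × (Fin Y.length → ℕ) => (p.1 : ℤ) • x + ∑ i, (p.2 i : ℤ) • Y.get i = γ)
      (Fin.consEquiv fun _ => ℕ).symm fun k => by rw [Fin.sum_univ_succ]; rfl).trans <|
    (Equiv.subtypeProdEquivSigmaSubtype fun (m : ℕ) (t : Fin Y.length → ℕ) =>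
      (m : ℤ) • x + ∑ i, (t i : ℤ) • Y.get i = γ).trans <|
      Equiv.sigmaCongrRight fun m => Equiv.subtypeEquivRight fun t => by
        rw [eq_sub_iff_add_eq, add_comm]

lemma finite_setOf_sum_mul_eq {κ : Type*} [Fintype κ] (d : κ → ℝ) (hd : ∀ i, 0 < d i) (c : ℝ) :
    {k : κ → ℕ | ∑ i, (k i : ℝ) * d i = c}.Finite := by
  classical
  refine (Set.finite_Iic fun i => ⌈c / d i⌉₊).subset fun k hk i => ?_
  have hki : (k i : ℝ) * d i ≤ c :=
    hk ▸ Finset.single_le_sum (f := fun j => (k j : ℝ) * d j)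
      (fun j _ => mul_nonneg (Nat.cast_nonneg _) (hd j).le) (Finset.mem_univ i)
  exact_mod_cast ((le_div_iff₀ (hd i)).mpr hki).trans (Nat.le_ceil _)

variable [Fintype ι]

lemma partFn_nil : partFn ([] : List (ZLat ι)) = delta0 := by
  funext γ
  by_cases hγ : γ = 0 <;> simp [partFn, delta0, hγ, eq_comm (a := (0 : ZLat ι))]

lemma sum_mul_pairing_eq (u : Amb ι) {Y : List (ZLat ι)} {γ : ZLat ι} (k : NatRep Y γ) :
    ∑ i, (k.1 i : ℝ) * pairing u (Y.get i) = pairing u γ := by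
  obtain ⟨k, rfl⟩ := k
  rw [map_sum]
  refine Finset.sum_congr rfl fun i _ => ?_
  rw [map_zsmul, zsmul_eq_mul, Int.cast_natCast]

lemma finite_natRep {u : Amb ι} {Y : List (ZLat ι)} (hY : ∀ y ∈ Y, 0 < pairing u y)
    (γ : ZLat ι) : Finite (NatRep Y γ) := by
  have hfin := finite_setOf_sum_mul_eq _ (fun i => hY _ (Y.get_mem i)) (pairing u γ)
  have := hfin.to_subtype
  exact Finite.of_injective
    (fun k : NatRep Y γ => (⟨k.1, sum_mul_pairing_eq u k⟩ :
      {k : Fin Y.length → ℕ | ∑ i, (k i : ℝ) * pairing u (Y.get i) = pairing u γ}))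
    fun _ _ h => Subtype.ext (by simpa using congrArg Subtype.val h)

lemma nab_partFn_cons {u : Amb ι} {x : ZLat ι} {Y : List (ZLat ι)}
    (hpos : ∀ y ∈ x :: Y, 0 < pairing u y) : nab x (partFn (x :: Y)) = partFn Y := by
  funext γ
  have e : NatRep (x :: Y) γ ≃ NatRep Y γ ⊕ NatRep (x :: Y) (γ - x) :=
    (natRepConsEquiv x Y γ).trans <| (Equiv.sigmaNatSucc _).trans <|
      Equiv.sumCongr (Equiv.cast (by simp)) <|
        (Equiv.sigmaCongrRight fun m => Equiv.cast (congrArg (NatRep Y) (by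
          push_cast; rw [add_smul, one_smul]; abel))).trans (natRepConsEquiv x Y (γ - x)).symm
  have := finite_natRep (fun y hy => hpos y (List.mem_cons_of_mem x hy)) γ
  have := finite_natRep hpos (γ - x)
  simp only [nab, partFn_apply, Nat.card_congr e, Nat.card_sum]
  push_cast
  ring

end PartitionFunction

section SignedPartitionFunction
variable {ι : Type*} [Fintype ι] {u : Amb ι}

noncomputable def signFlip (u : Amb ι) (a : ZLat ι) : ZLat ι :=
  if 0 < dotR u (castV a) then a else -a

noncomputable def negEntries (u : Amb ι) (L : List (ZLat ι)) : List (ZLat ι) :=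
  L.filter fun a => decide (dotR u (castV a) < 0)

/-- The list `W`, positive on `u`, is where the induction in `nabL_signedPartFn` moves the
entries of `L` once they are flipped. -/
noncomputable def signedPartFn (u : Amb ι) (L W : List (ZLat ι)) : ZLat ι → ℤ :=
  fun γ => (-1) ^ (negEntries u L).length *
    partFn (L.map (signFlip u) ++ W) (γ + (negEntries u L).sum)

lemma PF_eq_signedPartFn (X : List (ZLat ι)) (r : Submodule ℝ (Amb ι)) (u : Amb ι) :
    PF X r u = signedPartFn u (outSub X r) [] := by
  funext γ
  simp only [PF, signedPartFn, List.append_nil]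
  rfl

lemma pairing_signFlip_pos {a : ZLat ι} (ha : pairing u a ≠ 0) : 0 < pairing u (signFlip u a) := by
  rw [signFlip, ← pairing_apply]
  split_ifs with h
  · exact h
  · rw [map_neg, neg_pos]
    exact lt_of_le_of_ne (not_lt.mp h) ha

lemma signFlip_mem {H : AddSubgroup (ZLat ι)} {a : ZLat ι} (ha : a ∈ H) : signFlip u a ∈ H := by
  rw [signFlip]
  split_ifs
  exacts [ha, H.neg_mem ha]

lemma signedPartFn_perm {L L' : List (ZLat ι)} (h : L.Perm L') (W : List (ZLat ι)) :
    signedPartFn u L W = signedPartFn u L' W := by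
  have hneg := h.filter fun a => decide (dotR u (castV a) < 0)
  funext γ
  simp only [signedPartFn, negEntries, hneg.length_eq, hneg.sum_eq,
    partFn_perm ((h.map (signFlip u)).append_right W)]

lemma signedPartFn_append (K M W : List (ZLat ι)) :
    signedPartFn u (K ++ M) W = fun γ => (-1) ^ (negEntries u M).length *
      signedPartFn u K (M.map (signFlip u) ++ W) (γ + (negEntries u M).sum) := by
  funext γ
  simp only [signedPartFn, negEntries, List.filter_append, List.length_append, List.sum_append,
    List.map_append, List.append_assoc, pow_add, add_assoc, add_comm (List.sum (M.filter _))]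
  ring

lemma nab_signedPartFn_singleton {a : ZLat ι} {W : List (ZLat ι)} (ha : pairing u a ≠ 0)
    (hW : ∀ w ∈ W, 0 < pairing u w) : nab a (signedPartFn u [a] W) = partFn W := by
  have hpeel := nab_partFn_cons (x := signFlip u a) (Y := W) (u := u)
    (List.forall_mem_cons.mpr ⟨pairing_signFlip_pos ha, hW⟩)
  rcases ha.lt_or_gt with hneg | hpos
  · have hneg' : dotR u (castV a) < 0 := hneg
    have hflip : signFlip u a = -a := if_neg hneg'.not_gt
    have hval : signedPartFn u [a] W = fun γ => -partFn (-a :: W) (γ + a) := by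
      funext γ
      simp [signedPartFn, negEntries, hflip, hneg']
    rw [hflip] at hpeel
    rw [hval, ← hpeel]
    funext γ
    simp only [nab, sub_add_cancel, sub_neg_eq_add]
    ring
  · have hpos' : 0 < dotR u (castV a) := hpos
    have hflip : signFlip u a = a := if_pos hpos'
    have hval : signedPartFn u [a] W = partFn (a :: W) := by
      funext γ
      simp [signedPartFn, negEntries, hflip, hpos'.not_gt]
    rw [hflip] at hpeel
    rw [hval, hpeel]

lemma nabL_signedPartFn {L W : List (ZLat ι)} (hL : ∀ a ∈ L, pairing u a ≠ 0)
    (hW : ∀ w ∈ W, 0 < pairing u w) : nabL L (signedPartFn u L W) = partFn W := by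
  induction L generalizing W with
  | nil =>
    funext γ
    simp [signedPartFn, negEntries, nabL]
  | cons a L ih =>
    obtain ⟨ha, hL⟩ := List.forall_mem_cons.mp hL
    have hLW : ∀ w ∈ L.map (signFlip u) ++ W, 0 < pairing u w := by
      simp only [List.mem_append, List.mem_map]
      rintro w (⟨b, hb, rfl⟩ | hw)
      exacts [pairing_signFlip_pos (hL b hb), hW w hw]
    have hstep : nab a (signedPartFn u ([a] ++ L) W) = signedPartFn u L W := by
      have hcomm := nabL_mul_comp_add [a] ((-1) ^ (negEntries u L).length) (negEntries u L).sum
        (signedPartFn u [a] (L.map (signFlip u) ++ W))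
      simp only [nabL, List.foldr_cons, List.foldr_nil] at hcomm
      rw [signedPartFn_append, hcomm, nab_signedPartFn_singleton ha hLW]
      rfl
    calc nabL (a :: L) (signedPartFn u (a :: L) W)
        = nabL L (nab a (signedPartFn u ([a] ++ L) W)) := nab_nabL_comm _ _ _
      _ = partFn W := by rw [hstep, ih hL hW]

lemma Reg.pairing_ne_zero {X : List (ZLat ι)} {r : Submodule ℝ (Amb ι)} (hreg : Reg X r u) :
    ∀ a ∈ outSub X r, pairing u a ≠ 0 :=
  fun a ha => hreg.2 a (mem_outSub.mp ha).1 (mem_outSub.mp ha).2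

lemma nabOut_PF {X : List (ZLat ι)} {r : Submodule ℝ (Amb ι)} (hreg : Reg X r u) :
    nabOut X r (PF X r u) = delta0 := by
  rw [nabOut, PF_eq_signedPartFn, nabL_signedPartFn hreg.pairing_ne_zero (by simp), partFn_nil]

lemma support_nabOut_signedPartFn_subset {L : List (ZLat ι)} (hL : ∀ a ∈ L, pairing u a ≠ 0)
    (s : Submodule ℝ (Amb ι)) : support (nabOut L s (signedPartFn u L [])) ⊆ latticeIn s := by
  have hK : ∀ a ∈ outSub L s, pairing u a ≠ 0 := fun a ha => hL a (List.mem_of_mem_filter ha)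
  have hM : ∀ a ∈ inSub L s, a ∈ latticeIn s := fun a ha => (mem_inSub.mp ha).2
  have hMpos : ∀ w ∈ (inSub L s).map (signFlip u) ++ [], 0 < pairing u w := by
    simp only [List.append_nil, List.mem_map]
    rintro w ⟨b, hb, rfl⟩
    exact pairing_signFlip_pos (hL b (List.mem_of_mem_filter hb))
  rw [nabOut, signedPartFn_perm (outSub_append_inSub_perm L s).symm, signedPartFn_append,
    nabL_mul_comp_add, nabL_signedPartFn hK hMpos]
  intro γ hγ
  have h1 : γ + (negEntries u (inSub L s)).sum ∈ latticeIn s :=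
    mem_of_partFn_ne_zero _ (by simpa using fun b hb => signFlip_mem (hM b hb))
      (right_ne_zero_of_mul hγ)
  have h2 : (negEntries u (inSub L s)).sum ∈ latticeIn s :=
    list_sum_mem fun b hb => hM b (List.mem_of_mem_filter hb)
  simpa using sub_mem h1 h2

end SignedPartitionFunction

section Convolution
variable {ι : Type*} {h g : ZLat ι → ℤ}

def ConvFinite (h g : ZLat ι → ℤ) : Prop :=
  ∀ γ, (support fun μ => h (γ - μ) * g μ).Finite

lemma ConvFinite.finite_shift (hf : ConvFinite h g) (a γ : ZLat ι) :
    (support fun μ => h (γ - μ) * g (μ - a)).Finite := by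
  refine (Set.Finite.preimage (f := fun μ => μ - a) sub_left_injective.injOn (hf (γ - a))).subset
    fun μ hμ => ?_
  simpa [sub_sub_sub_cancel_right] using hμ

lemma ConvFinite.nab_left (hf : ConvFinite h g) (a : ZLat ι) : ConvFinite (nab a h) g :=
  fun γ => ((hf γ).union (hf (γ - a))).subset fun μ hμ => by
    by_contra hc
    simp only [Set.mem_union, mem_support, not_or, not_not] at hc
    apply hμ
    simp only [nab, sub_mul, sub_right_comm γ μ a, hc.1, hc.2, sub_zero]

lemma ConvFinite.nab_right (hf : ConvFinite h g) (a : ZLat ι) : ConvFinite h (nab a g) :=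
  fun γ => ((hf γ).union (hf.finite_shift a γ)).subset fun μ hμ => by
    by_contra hc
    simp only [Set.mem_union, mem_support, not_or, not_not] at hc
    apply hμ
    simp only [nab, mul_sub, hc.1, hc.2, sub_zero]

lemma ConvFinite.nab_conv_left (hf : ConvFinite h g) (a : ZLat ι) :
    nab a (conv h g) = conv (nab a h) g := by
  funext γ
  rw [nab, conv, conv, conv, ← finsum_sub_distrib (hf γ) (hf (γ - a))]
  exact finsum_congr fun μ => by rw [nab, sub_mul, sub_right_comm]

lemma ConvFinite.nab_conv_right (hf : ConvFinite h g) (a : ZLat ι) :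
    nab a (conv h g) = conv h (nab a g) := by
  funext γ
  have hshift : conv h g (γ - a) = ∑ᶠ μ, h (γ - μ) * g (μ - a) := by
    rw [conv, ← finsum_comp_equiv (Equiv.subRight a)]
    simp [sub_sub_sub_cancel_right]
  rw [nab, hshift, conv, conv, ← finsum_sub_distrib (hf γ) (hf.finite_shift a γ)]
  exact finsum_congr fun μ => by rw [nab, mul_sub]

lemma ConvFinite.nabL_left (hf : ConvFinite h g) (L : List (ZLat ι)) :
    ConvFinite (nabL L h) g := by
  induction L with
  | nil => exact hf
  | cons a L ih => exact ih.nab_left a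

lemma ConvFinite.nabL_right (hf : ConvFinite h g) (M : List (ZLat ι)) :
    ConvFinite h (nabL M g) := by
  induction M with
  | nil => exact hf
  | cons a M ih => exact ih.nab_right a

lemma ConvFinite.nabL_conv_left (hf : ConvFinite h g) (L : List (ZLat ι)) :
    nabL L (conv h g) = conv (nabL L h) g := by
  induction L with
  | nil => rfl
  | cons a L ih => exact (congrArg (nab a) ih).trans ((hf.nabL_left L).nab_conv_left a)

lemma ConvFinite.nabL_conv_right (hf : ConvFinite h g) (M : List (ZLat ι)) :
    nabL M (conv h g) = conv h (nabL M g) := by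
  induction M with
  | nil => rfl
  | cons a M ih => exact (congrArg (nab a) ih).trans ((hf.nabL_right M).nab_conv_right a)

lemma ConvFinite.nabL_append_conv (hf : ConvFinite h g) (L M : List (ZLat ι)) :
    nabL (L ++ M) (conv h g) = conv (nabL L h) (nabL M g) := by
  rw [nabL_append, hf.nabL_conv_right M, (hf.nabL_right M).nabL_conv_left L]

lemma support_conv_subset (H : AddSubgroup (ZLat ι)) (hh : support h ⊆ H) (hg : support g ⊆ H) :
    support (conv h g) ⊆ H := by
  intro γ hγ
  by_contra hγH
  refine hγ (finsum_eq_zero_of_forall_eq_zero fun μ => ?_)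
  by_contra hne
  obtain ⟨h1, h2⟩ := mul_ne_zero_iff.mp hne
  exact hγH (by simpa using H.add_mem (hh h1) (hg h2))

variable [Fintype ι]

lemma conv_delta0 (g : ZLat ι → ℤ) : conv delta0 g = g := by
  funext γ
  rw [conv, finsum_eq_single _ γ fun μ hμ => by simp [delta0, sub_eq_zero, Ne.symm hμ]]
  simp [delta0]

lemma convFinite_partFn {u : Amb ι} {S : List (ZLat ι)} (hS : ∀ w ∈ S, 0 < pairing u w)
    (c : ℤ) (v : ZLat ι) (hg : ∀ μ, g μ ≠ 0 → pairing u μ = 0) :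
    ConvFinite (fun ν => c * partFn S (ν + v)) g := by
  intro γ
  refine ((finite_setOf_sum_mul_eq _ (fun i => hS _ (S.get_mem i)) (pairing u (γ + v))).image
    fun k => γ + v - ∑ i, (k i : ℤ) • S.get i).subset fun μ hμ => ?_
  obtain ⟨hP, hgμ⟩ := mul_ne_zero_iff.mp hμ
  obtain ⟨k, hk⟩ := nonempty_natRep_of_partFn_ne_zero (right_ne_zero_of_mul hP)
  refine ⟨k, ?_, show γ + v - ∑ i, (k i : ℤ) • S.get i = μ by rw [hk]; abel⟩
  have hsum := sum_mul_pairing_eq u ⟨k, hk⟩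
  rw [map_add, map_sub, hg μ hgμ, sub_zero, ← map_add] at hsum
  exact hsum

end Convolution

section Surjectivity
variable {ι : Type*} [Fintype ι]

lemma exists_reg (X : List (ZLat ι)) (r : Submodule ℝ (Amb ι)) : ∃ u, Reg X r u := by
  obtain ⟨φ, hφ⟩ := Module.exists_dual_forall_apply_ne_zero (K := ℝ)
    (fun a : {a // a ∈ outSub X r} => r.mkQ (castV a))
    fun a => by simpa [Submodule.Quotient.mk_eq_zero] using (mem_outSub.mp a.2).2
  refine ⟨(dotProductEquiv ℝ ι).symm (φ ∘ₗ r.mkQ), fun v hv => ?_, fun a ha har => ?_⟩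
  · change dotProductEquiv ℝ ι ((dotProductEquiv ℝ ι).symm (φ ∘ₗ r.mkQ)) v = 0
    simp [(Submodule.Quotient.mk_eq_zero r).mpr hv]
  · change dotProductEquiv ℝ ι ((dotProductEquiv ℝ ι).symm (φ ∘ₗ r.mkQ)) (castV a) ≠ 0
    simpa using hφ ⟨a, mem_outSub.mpr ⟨ha, har⟩⟩

lemma exists_memF_nabOut_eq {X : List (ZLat ι)} {r : Submodule ℝ (Amb ι)} {g : ZLat ι → ℤ}
    (hg : memFrel X r g) : ∃ f, memF X f ∧ nabOut X r f = g := by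
  obtain ⟨u, hreg⟩ := exists_reg X r
  have hpos : ∀ w ∈ signedOut X r u, 0 < pairing u w := by
    simp only [signedOut, List.mem_map]
    rintro w ⟨a, ha, rfl⟩
    exact pairing_signFlip_pos (hreg.pairing_ne_zero a ha)
  have hfin : ConvFinite (PF X r u) g := convFinite_partFn hpos _ _ fun μ hμ => hreg.1 _ (hg.1 hμ)
  refine ⟨conv (PF X r u) g, fun s _ => ?_, ?_⟩
  · rw [nabOut, nabL_perm (outSub_perm X r s), hfin.nabL_append_conv]
    refine support_conv_subset (latticeIn s) ?_ (hg.2.support_nabOut_subset s)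
    rw [PF_eq_signedPartFn]
    exact support_nabOut_signedPartFn_subset hreg.pairing_ne_zero s
  · rw [nabOut, hfin.nabL_conv_left, ← nabOut, nabOut_PF hreg, conv_delta0]

end Surjectivity

theorem nabOut_surjective_general {ι : Type*} [Fintype ι] (X : List (ZLat ι))
    (r : Submodule ℝ (Amb ι)) (hr : IsRational X r) :
    (∀ f : ZLat ι → ℤ, memF X f → memFrel X r (nabOut X r f)) ∧
    ∀ g : ZLat ι → ℤ, memFrel X r g → ∃ f : ZLat ι → ℤ, memF X f ∧ nabOut X r f = g :=
  ⟨fun _ hf => memFrel_nabOut hr hf, fun _ hg => exists_memF_nabOut_eq hg⟩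

/-- For every rational subspace `r`, the operator `∇_{X\r}` maps `𝓕(X)` surjectively onto
`𝓕(X∩r)`. -/
theorem nabOut_surjective {ι : Type*} [Fintype ι] (X : List (ZLat ι))
    (hX0 : ∀ a ∈ X, a ≠ 0) (hspan : spanOf X = ⊤)
    (r : Submodule ℝ (Amb ι)) (hr : IsRational X r) :
    (∀ f : ZLat ι → ℤ, memF X f → memFrel X r (nabOut X r f)) ∧
    ∀ g : ZLat ι → ℤ, memFrel X r g → ∃ f : ZLat ι → ℤ, memF X f ∧ nabOut X r f = g :=
  nabOut_surjective_general X r hr
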